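/- arXiv:2605.24181 — 3 statements merged into one kernel-verified Lean document; each statement's English description precedes it below -/
import Mathlib

section
/- Let C be a neural code on n neurons with canonical form CF(C) = {g_1, …, g_k}, and let J = (P(g_1), …, P(g_k)) ⊆ S be its polarized neural ideal. Then {P(g_1), …, P(g_k)} is a minimal generating set for J; in particular, no P(g_i) is divisible by any P(g_j) for j ≠ i, and no proper subset of {P(g_1), …, P(g_k)} generates J. -/
open MvPolynomial Finset

noncomputable section NeuralCore

/-- The field with two elements. -/
abbrev F2 : Type := ZMod 2

/-- The variables of the polarized ring `S = F2[x_1,…,x_n,y_1,…,y_n]`: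
`Sum.inl i` is `x_i` and `Sum.inr i` is `y_i`. -/
abbrev SV (n : ℕ) : Type := Fin n ⊕ Fin n

/-- The polarized polynomial ring `S = F2[x_1,…,x_n,y_1,…,y_n]`. -/
abbrev PolyS (n : ℕ) : Type := MvPolynomial (SV n) F2

/-- The polynomial ring `R = F2[x_1,…,x_n]`. -/
abbrev PolyR (n : ℕ) : Type := MvPolynomial (Fin n) F2

/-- The pseudo-monomial `∏_{i ∈ σ} x_i ∏_{j ∈ τ} (1 - x_j)`. -/
def pseudoMonomial {n : ℕ} (σ τ : Finset (Fin n)) : PolyR n :=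
  (∏ i ∈ σ, X i) * ∏ j ∈ τ, (1 - X j)

/-- A polynomial of `R` is a pseudo-monomial if it has the form
`∏_{i ∈ σ} x_i ∏_{j ∈ τ} (1 - x_j)` with `σ ∩ τ = ∅`. -/
def IsPseudoMonomial {n : ℕ} (f : PolyR n) : Prop :=
  ∃ σ τ : Finset (Fin n), Disjoint σ τ ∧ f = pseudoMonomial σ τ

/-- `ρ_v = ∏_{i ∈ v} x_i ∏_{j ∉ v} (1 - x_j)`. -/
def rhoPoly {n : ℕ} (v : Finset (Fin n)) : PolyR n := pseudoMonomial v vᶜ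

/-- The neural ideal `L = (ρ_v : v ∉ C)` of a neural code `C ⊆ 2^[n]`. -/
def neuralIdeal {n : ℕ} (C : Finset (Finset (Fin n))) : Ideal (PolyR n) :=
  Ideal.span {f | ∃ v : Finset (Fin n), v ∉ C ∧ f = rhoPoly v}

/-- The canonical form `CF(C)`: the pseudo-monomials of the neural ideal divisible by
no other pseudo-monomial of the neural ideal. -/
def canonicalForm {n : ℕ} (C : Finset (Finset (Fin n))) : Set (PolyR n) :=
  {f | IsPseudoMonomial f ∧ f ∈ neuralIdeal C ∧
    ∀ g : PolyR n, IsPseudoMonomial g → g ∈ neuralIdeal C → g ∣ f → g = f}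

/-- The polarization `∏_{i ∈ σ} x_i ∏_{j ∈ τ} y_j ∈ S` of the pseudo-monomial
determined by the pair `(σ, τ)`. -/
def polarize {n : ℕ} (σ τ : Finset (Fin n)) : PolyS n :=
  (∏ i ∈ σ, X (Sum.inl i)) * ∏ j ∈ τ, X (Sum.inr j)

/-- The set of polarizations of the elements of the canonical form of `C`. -/
def polarizedCanonicalForm {n : ℕ} (C : Finset (Finset (Fin n))) : Set (PolyS n) :=
  {m | ∃ σ τ : Finset (Fin n), Disjoint σ τ ∧
    pseudoMonomial σ τ ∈ canonicalForm C ∧ m = polarize σ τ}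

/-- The polarized neural ideal `J ⊆ S` of a neural code `C`. -/
def polarizedNeuralIdeal {n : ℕ} (C : Finset (Finset (Fin n))) : Ideal (PolyS n) :=
  Ideal.span (polarizedCanonicalForm C)

/-- The deletion `C ∖ i` of neuron `i` from the code `C`. -/
def deleteNeuron {n : ℕ} (C : Finset (Finset (Fin n))) (i : Fin n) :
    Finset (Finset (Fin n)) :=
  C.image (fun c => c.erase i)

/-- Deletion of a set of neurons from the code `C`. -/
def deleteSet {n : ℕ} (C : Finset (Finset (Fin n))) (s : Finset (Fin n)) :
    Finset (Finset (Fin n)) :=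
  C.image (fun c => c \ s)

/-- The interval `[σ, τ] = {γ : σ ⊆ γ ⊆ τ}`. -/
def codeInterval {n : ℕ} (σ τ : Finset (Fin n)) : Finset (Finset (Fin n)) :=
  τ.powerset.filter (fun γ => σ ⊆ γ)

/-- Neuron `i` is a piercing of `C ∖ i` with piercing data `σ ⊆ τ ⊆ [n] ∖ {i}`:
`[σ,τ] ⊆ C∖i` and `C = (C∖i) ∪ [σ ∪ {i}, τ ∪ {i}]`. -/
def IsPiercingWith {n : ℕ} (C : Finset (Finset (Fin n))) (i : Fin n)
    (σ τ : Finset (Fin n)) : Prop :=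
  σ ⊆ τ ∧ i ∉ τ ∧ codeInterval σ τ ⊆ deleteNeuron C i ∧
    C = deleteNeuron C i ∪ codeInterval (insert i σ) (insert i τ)

/-- Neuron `i` is a `k`-piercing of `C ∖ i`. -/
def IsPiercing {n : ℕ} (C : Finset (Finset (Fin n))) (i : Fin n) (k : ℕ) : Prop :=
  ∃ σ τ : Finset (Fin n), IsPiercingWith C i σ τ ∧ τ.card = σ.card + k

/-- A code is inductively pierced if it is `{∅}` or some neuron is a `k`-piercing of the
code with it deleted, and the deleted code is inductively pierced. -/
inductive InductivelyPierced {n : ℕ} : Finset (Finset (Fin n)) → Prop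
  | base : InductivelyPierced {∅}
  | step (C : Finset (Finset (Fin n))) (i : Fin n) (k : ℕ) :
      IsPiercing C i k → InductivelyPierced (deleteNeuron C i) → InductivelyPierced C

/-- A piercing order for the code `C`: an ordering `ord 0, ord 1, …, ord (n-1)` of the
neurons together with piercing data `(sig j, tau j)` such that each `ord j` is a
piercing of the code obtained from `C` by deleting the later neurons. -/
structure PiercingOrder {n : ℕ} (C : Finset (Finset (Fin n))) where
  ord : Fin n ≃ Fin n
  sig : Fin n → Finset (Fin n)
  tau : Fin n → Finset (Fin n)
  piercing : ∀ j : Fin n,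
    IsPiercingWith
      (deleteSet C (Finset.univ.filter (fun i => ∃ m : Fin n, j < m ∧ ord m = i)))
      (ord j) (sig j) (tau j)

/-- The rank of the piercing at step `j` of a piercing order. -/
def PiercingOrder.kOf {n : ℕ} {C : Finset (Finset (Fin n))} (P : PiercingOrder C)
    (j : Fin n) : ℕ :=
  (P.tau j).card - (P.sig j).card

/-- `j_k`: the number of `k`-piercings in a piercing order. -/
def PiercingOrder.jnum {n : ℕ} {C : Finset (Finset (Fin n))} (P : PiercingOrder C)
    (k : ℕ) : ℕ :=
  (Finset.univ.filter (fun j : Fin n => P.kOf j = k)).card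

/-- `j_{k,v}`: the number of `k`-piercings contained in exactly `v` other place fields
(`|σ| = v`) in a piercing order. -/
def PiercingOrder.jnum2 {n : ℕ} {C : Finset (Finset (Fin n))} (P : PiercingOrder C)
    (k v : ℕ) : ℕ :=
  (Finset.univ.filter (fun j : Fin n => P.kOf j = k ∧ (P.sig j).card = v)).card

/-- The piercing ideal `p_i = (x_j : j ∈ [n]∖({i} ∪ τ)) + (y_j : j ∈ σ)`. -/
def piercingIdeal {n : ℕ} (i : Fin n) (σ τ : Finset (Fin n)) : Ideal (PolyS n) :=
  Ideal.span ({m | ∃ j : Fin n, j ≠ i ∧ j ∉ τ ∧ m = X (Sum.inl j)} ∪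
    {m | ∃ j ∈ σ, m = X (Sum.inr j)})

/-! ### Multigraded structure on `S` -/

/-- The multidegree `(u, v)` of an exponent vector: total degree in the `x`'s and in
the `y`'s, where `deg x_i = (1,0)` and `deg y_i = (0,1)`. -/
def mdeg {n : ℕ} (d : SV n →₀ ℕ) : ℕ × ℕ :=
  (∑ i : Fin n, d (Sum.inl i), ∑ i : Fin n, d (Sum.inr i))

/-- The total degree of an exponent vector in the standard grading. -/
def sdeg {n : ℕ} (d : SV n →₀ ℕ) : ℕ := ∑ v : SV n, d v

/-- The multidegree of a squarefree set of variables. -/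
def tdegT {n : ℕ} (T : Finset (SV n)) : ℕ × ℕ :=
  ((T.filter (fun v => v.isLeft = true)).card, (T.filter (fun v => v.isLeft ≠ true)).card)

/-- The multidegree-`(u,v)` homogeneous component of `S`, as an `F2`-subspace. -/
def homogComp (n : ℕ) (uv : ℕ × ℕ) : Submodule F2 (PolyS n) where
  carrier := {f | ∀ d ∈ f.support, mdeg d = uv}
  add_mem' := by
    intro a b ha hb d hd
    rcases Finset.mem_union.mp (MvPolynomial.support_add hd) with h | h
    · exact ha d h
    · exact hb d h
  zero_mem' := by intro d hd; simp at hd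
  smul_mem' := by
    intro c f hf d hd
    exact hf d (MvPolynomial.support_smul hd)

/-- The degree-`i` homogeneous component of `S` in the standard grading. -/
def homogComp1 (n : ℕ) (i : ℕ) : Submodule F2 (PolyS n) where
  carrier := {f | ∀ d ∈ f.support, sdeg d = i}
  add_mem' := by
    intro a b ha hb d hd
    rcases Finset.mem_union.mp (MvPolynomial.support_add hd) with h | h
    · exact ha d h
    · exact hb d h
  zero_mem' := by intro d hd; simp at hd
  smul_mem' := by
    intro c f hf d hd
    exact hf d (MvPolynomial.support_smul hd)

/-! ### Koszul complex computing `Tor^S_•(M, F2)` and Betti numbers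

`Tor^S_w(M, F2)` is computed as the `w`-th homology of `K ⊗_S M` where `K` is the
Koszul resolution of `F2 = S/(x_1,…,y_n)` on the `2n` variables.  (Over `F2` no signs
are needed.)  Graded and multigraded Betti numbers are the dimensions of the
corresponding graded components. -/

section Koszul

variable (n : ℕ) (M : Type) [AddCommGroup M] [Module (PolyS n) M]
  [Module F2 M] [IsScalarTower F2 (PolyS n) M]

/-- Basis indices in homological degree `w` of the Koszul complex: `w`-subsets of the
variables. -/
abbrev KIdx (w : ℕ) : Type := {T : Finset (SV n) // T.card = w}

/-- Homological degree `w` of `K ⊗_S M`. -/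
abbrev kC (w : ℕ) : Type := KIdx n w → M

/-- The Koszul differential `(K ⊗_S M)_{w+1} → (K ⊗_S M)_w` (over `F2`, signs are
irrelevant): `d f T = ∑_{i ∉ T} x_i • f (T ∪ {i})`. -/
def kd (w : ℕ) : kC n M (w + 1) →ₗ[PolyS n] kC n M w where
  toFun f T := ∑ i ∈ T.1ᶜ.attach,
    (X i.1 : PolyS n) • f ⟨insert i.1 T.1, by
      rw [Finset.card_insert_of_notMem (Finset.mem_compl.mp i.2), T.2]⟩
  map_add' f g := by
    funext T
    simp [Pi.add_apply, smul_add, Finset.sum_add_distrib]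
  map_smul' c f := by
    funext T
    simp only [Pi.smul_apply, RingHom.id_apply, Finset.smul_sum]
    exact Finset.sum_congr rfl (fun i _ => smul_comm _ _ _)

/-- The cycles of `K ⊗_S M` in homological degree `w`. -/
def kcycles : (w : ℕ) → Submodule (PolyS n) (kC n M w)
  | 0 => ⊤
  | (w + 1) => LinearMap.ker (kd n M w)

/-- The boundaries of `K ⊗_S M` in homological degree `w`. -/
def kboundaries (w : ℕ) : Submodule (PolyS n) (kC n M w) :=
  LinearMap.range (kd n M w)

/-- The `w`-th homology of `K ⊗_S M`, i.e. `Tor^S_w(M, F2)`. -/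
def kHomology (w : ℕ) : Type :=
  ↥(kcycles n M w) ⧸ ((kboundaries n M w).comap (kcycles n M w).subtype)

instance (w : ℕ) : AddCommGroup (kHomology n M w) := by
  unfold kHomology; infer_instance

instance (w : ℕ) : Module (PolyS n) (kHomology n M w) := by
  unfold kHomology; infer_instance

instance (w : ℕ) : Module F2 (kHomology n M w) := by
  unfold kHomology; infer_instance

/-- The (total) Betti number `β_w(M) = dim_{F2} Tor^S_w(M, F2)`. -/
def bettiNum (w : ℕ) : ℕ := Module.finrank F2 (kHomology n M w)

/-- Shifted graded component: the degree `uv - t` component of a multigraded module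
with components `g`, interpreted as `⊥` when `t ≰ uv`. -/
def shiftComp (g : ℕ × ℕ → Submodule F2 M) (uv t : ℕ × ℕ) : Submodule F2 M :=
  if t.1 ≤ uv.1 ∧ t.2 ≤ uv.2 then g (uv.1 - t.1, uv.2 - t.2) else ⊥

/-- The multidegree-`uv` component of `(K ⊗_S M)_w`, for a module `M` whose
multigrading is given by `g`; the basis element `e_T` has multidegree `tdegT T`. -/
def gradedKC (g : ℕ × ℕ → Submodule F2 M) (w : ℕ) (uv : ℕ × ℕ) :
    Submodule F2 (kC n M w) :=
  Submodule.pi Set.univ (fun T : KIdx n w => shiftComp (M := M) g uv (tdegT T.1))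

/-- The multigraded Betti number `β_{w,u,v}(M) = dim_{F2} Tor^S_w(M, F2)_{(u,v)}`:
the dimension of the `(u,v)`-component of the `w`-th Koszul homology. -/
def bettiNumM (g : ℕ × ℕ → Submodule F2 M) (w : ℕ) (uv : ℕ × ℕ) : ℕ :=
  Module.finrank F2
      ↥(gradedKC n M g w uv ⊓ (kcycles n M w).restrictScalars F2) -
    Module.finrank F2
      ↥(gradedKC n M g w uv ⊓ (kcycles n M w).restrictScalars F2 ⊓
        (kboundaries n M w).restrictScalars F2)

/-- The degree-`i` component of `(K ⊗_S M)_w` in the standard grading, for a module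
`M` whose grading is given by `g1`; each basis element `e_T` has degree `w`. -/
def gradedKC1 (g1 : ℕ → Submodule F2 M) (w i : ℕ) : Submodule F2 (kC n M w) :=
  Submodule.pi Set.univ
    (fun _ : KIdx n w => if w ≤ i then g1 (i - w) else (⊥ : Submodule F2 M))

/-- The graded Betti number `β_{w,i}(M) = dim_{F2} Tor^S_w(M, F2)_i` in the standard
grading. -/
def bettiNumGr (g1 : ℕ → Submodule F2 M) (w i : ℕ) : ℕ :=
  Module.finrank F2
      ↥(gradedKC1 n M g1 w i ⊓ (kcycles n M w).restrictScalars F2) -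
    Module.finrank F2
      ↥(gradedKC1 n M g1 w i ⊓ (kcycles n M w).restrictScalars F2 ⊓
        (kboundaries n M w).restrictScalars F2)

end Koszul

/-! ### Betti numbers of quotients `S/J` and of ideals `J` -/

/-- The multigrading on `S ⧸ J` induced from `S` (for homogeneous `J`). -/
def quotGradingM {n : ℕ} (J : Ideal (PolyS n)) (uv : ℕ × ℕ) :
    Submodule F2 (PolyS n ⧸ J) :=
  (homogComp n uv).map (Ideal.Quotient.mkₐ F2 J).toLinearMap

/-- The standard grading on `S ⧸ J` induced from `S` (for homogeneous `J`). -/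
def quotGrading1 {n : ℕ} (J : Ideal (PolyS n)) (i : ℕ) :
    Submodule F2 (PolyS n ⧸ J) :=
  (homogComp1 n i).map (Ideal.Quotient.mkₐ F2 J).toLinearMap

/-- The standard grading on an ideal `J ⊆ S` viewed as an `S`-module. -/
def idealGrading1 {n : ℕ} (J : Ideal (PolyS n)) (i : ℕ) : Submodule F2 ↥J :=
  (homogComp1 n i).comap ((J.subtype).restrictScalars F2)

/-- `β_w(S/J)`. -/
def quotBetti {n : ℕ} (J : Ideal (PolyS n)) (w : ℕ) : ℕ :=
  bettiNum n (PolyS n ⧸ J) w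

/-- The graded Betti number `β_{w,i}(S/J)`. -/
def quotBettiGr {n : ℕ} (J : Ideal (PolyS n)) (w i : ℕ) : ℕ :=
  bettiNumGr n (PolyS n ⧸ J) (quotGrading1 J) w i

/-- The multigraded Betti number `β_{w,u,v}(S/J)`. -/
def quotBettiM {n : ℕ} (J : Ideal (PolyS n)) (w : ℕ) (uv : ℕ × ℕ) : ℕ :=
  bettiNumM n (PolyS n ⧸ J) (quotGradingM J) w uv

/-- The graded Betti number `β_{w,i}(J)` of an ideal viewed as an `S`-module. -/
def idealBettiGr {n : ℕ} (J : Ideal (PolyS n)) (w i : ℕ) : ℕ :=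
  bettiNumGr n ↥J (idealGrading1 J) w i

/-- The Castelnuovo–Mumford regularity of the ideal `J`:
`reg J = max { i - w : β_{w,i}(J) ≠ 0 }`. -/
def idealRegularity {n : ℕ} (J : Ideal (PolyS n)) : ℕ :=
  sSup {r : ℕ | ∃ w i : ℕ, idealBettiGr J w i ≠ 0 ∧ i = w + r}

/-- The projective dimension of `S/J`: the largest `w` with `β_w(S/J) ≠ 0`. -/
def quotPdim {n : ℕ} (J : Ideal (PolyS n)) : ℕ :=
  sSup {w : ℕ | quotBetti J w ≠ 0}

/-- Integer binomial coefficient with the convention `binom a b = 0` unless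
`0 ≤ b ≤ a`. -/
def binom (a b : ℤ) : ℤ :=
  if 0 ≤ a ∧ 0 ≤ b then ((a.toNat).choose b.toNat : ℤ) else 0

end NeuralCore

/-! Evaluation at 0/1-points reads off the index sets. At the indicator vector of `v` the
pseudo-monomial of `(σ, τ)` is the indicator of the interval `[σ, τᶜ]`, so it determines
`(σ, τ)`; at the indicator point of `(a, b)` the polarization of `(σ, τ)` is the indicator of
`σ ⊆ a ∧ τ ⊆ b`. So an ideal containing the polarization of `(σ, τ)` has a generator not
vanishing at the point of `(σ, τ)`; if that generator is the polarization of a canonical-form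
pair, the pair is nested in `(σ, τ)`, and minimality of the canonical form makes it `(σ, τ)`. -/

theorem Ideal.exists_mem_apply_ne_zero_of_mem_span {R S : Type*} [CommSemiring R]
    [Semiring S] (f : R →+* S) {G : Set R} {x : R} (hx : x ∈ Ideal.span G) (hfx : f x ≠ 0) :
    ∃ g ∈ G, f g ≠ 0 := by
  by_contra! h
  exact hfx (Ideal.span_le.2 (fun g hg => RingHom.mem_ker.2 (h g hg)) hx)

section NeuralCode

variable {n : ℕ}

def indicatorVec {ι : Type*} [DecidableEq ι] (v : Finset ι) : ι → F2 :=
  fun i => if i ∈ v then 1 else 0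

theorem eval_indicatorVec_pseudoMonomial (σ τ v : Finset (Fin n)) :
    eval (indicatorVec v) (pseudoMonomial σ τ) = if v ∈ Set.Icc σ τᶜ then 1 else 0 := by
  have h : ∀ j, 1 - indicatorVec v j = if j ∉ v then 1 else 0 := fun j => by
    unfold indicatorVec; split_ifs <;> simp_all
  simp only [pseudoMonomial, map_mul, map_prod, map_sub, map_one, eval_X, h]
  unfold indicatorVec
  rw [Finset.prod_boole, Finset.prod_boole, ite_zero_mul_ite_zero, mul_one]
  congr 1
  rw [Set.mem_Icc, Finset.subset_compl_iff_disjoint_right, disjoint_comm, Finset.disjoint_left]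
  rfl

theorem pseudoMonomial_inj {σ τ σ' τ' : Finset (Fin n)} (hd : Disjoint σ τ)
    (heq : pseudoMonomial σ τ = pseudoMonomial σ' τ') : σ = σ' ∧ τ = τ' := by
  have hIcc : Set.Icc σ τᶜ = Set.Icc σ' τ'ᶜ := Set.ext fun v => by
    have := congrArg (eval (indicatorVec v)) heq
    simp only [eval_indicatorVec_pseudoMonomial] at this
    by_cases h : v ∈ Set.Icc σ τᶜ <;> by_cases h' : v ∈ Set.Icc σ' τ'ᶜ <;>
      simp only [h, h', if_true, if_false] at this
    exacts [iff_of_true h h', absurd this one_ne_zero, absurd this zero_ne_one,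
      iff_of_false h h']
  obtain ⟨hσ, hτ⟩ := (Set.Icc_eq_Icc_iff (Finset.subset_compl_iff_disjoint_right.2 hd)).1 hIcc
  exact ⟨hσ, compl_injective hτ⟩

theorem pseudoMonomial_dvd_pseudoMonomial {σ τ σ' τ' : Finset (Fin n)} (hσ : σ' ⊆ σ)
    (hτ : τ' ⊆ τ) : pseudoMonomial σ' τ' ∣ pseudoMonomial σ τ := by
  unfold pseudoMonomial
  rw [← Finset.prod_sdiff hσ, ← Finset.prod_sdiff hτ]
  exact mul_dvd_mul (dvd_mul_left _ _) (dvd_mul_left _ _)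

theorem eq_of_subset_of_mem_canonicalForm {C : Finset (Finset (Fin n))}
    {σ τ σ' τ' : Finset (Fin n)} (hd' : Disjoint σ' τ')
    (hcf : pseudoMonomial σ τ ∈ canonicalForm C)
    (hcf' : pseudoMonomial σ' τ' ∈ canonicalForm C) (hσ : σ' ⊆ σ) (hτ : τ' ⊆ τ) :
    σ' = σ ∧ τ' = τ :=
  pseudoMonomial_inj hd' <|
    hcf.2.2 _ ⟨σ', τ', hd', rfl⟩ hcf'.2.1 (pseudoMonomial_dvd_pseudoMonomial hσ hτ)

theorem eval_indicatorVec_polarize (σ τ a b : Finset (Fin n)) :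
    eval (Sum.elim (indicatorVec a) (indicatorVec b)) (polarize σ τ)
      = if σ ⊆ a ∧ τ ⊆ b then 1 else 0 := by
  simp only [polarize, map_mul, map_prod, eval_X, Sum.elim_inl, Sum.elim_inr]
  unfold indicatorVec
  rw [Finset.prod_boole, Finset.prod_boole, ite_zero_mul_ite_zero, mul_one]
  rfl

theorem eq_polarize_of_eval_ne_zero {C : Finset (Finset (Fin n))} {σ τ : Finset (Fin n)}
    (hcf : pseudoMonomial σ τ ∈ canonicalForm C) {g : PolyS n}
    (hg : g ∈ polarizedCanonicalForm C)
    (hne : eval (Sum.elim (indicatorVec σ) (indicatorVec τ)) g ≠ 0) :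
    g = polarize σ τ := by
  obtain ⟨σ', τ', hd', hcf', rfl⟩ := hg
  rw [eval_indicatorVec_polarize, ne_eq, ite_eq_right_iff, Classical.not_imp] at hne
  obtain ⟨rfl, rfl⟩ := eq_of_subset_of_mem_canonicalForm hd' hcf hcf' hne.1.1 hne.1.2
  rfl

theorem eval_indicatorVec_polarize_self (σ τ : Finset (Fin n)) :
    eval (Sum.elim (indicatorVec σ) (indicatorVec τ)) (polarize σ τ) ≠ 0 := by
  simp [eval_indicatorVec_polarize]

end NeuralCode

theorem polarizedCanonicalForm_minimal_generating_set_general {n : ℕ}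
    (C : Finset (Finset (Fin n))) :
    (∀ g ∈ polarizedCanonicalForm C, ∀ g' ∈ polarizedCanonicalForm C,
      g' ∣ g → g' = g) ∧
    (∀ G : Set (PolyS n), G ⊂ polarizedCanonicalForm C →
      Ideal.span G ≠ polarizedNeuralIdeal C) := by
  constructor
  · rintro g ⟨σ, τ, -, hcf, rfl⟩ g' hg' hdvd
    obtain ⟨_, rfl, hne⟩ := Ideal.exists_mem_apply_ne_zero_of_mem_span (eval₂Hom _ _)
      (Ideal.mem_span_singleton.2 hdvd) (eval_indicatorVec_polarize_self σ τ)
    exact eq_polarize_of_eval_ne_zero hcf hg' hne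
  · intro G hG hspan
    obtain ⟨_, ⟨σ, τ, hd, hcf, rfl⟩, hnotG⟩ := Set.exists_of_ssubset hG
    have hmem : polarize σ τ ∈ Ideal.span G :=
      hspan ▸ Ideal.subset_span ⟨σ, τ, hd, hcf, rfl⟩
    obtain ⟨g, hgG, hne⟩ := Ideal.exists_mem_apply_ne_zero_of_mem_span (eval₂Hom _ _)
      hmem (eval_indicatorVec_polarize_self σ τ)
    exact hnotG (eq_polarize_of_eval_ne_zero hcf (hG.subset hgG) hne ▸ hgG)

/-- The polarized canonical form is a minimal generating set for the
polarized neural ideal: no element divides another, and no proper subset generates. -/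
theorem polarizedCanonicalForm_minimal_generating_set {n : ℕ}
    (C : Finset (Finset (Fin n))) (hC : ∅ ∈ C) :
    (∀ g ∈ polarizedCanonicalForm C, ∀ g' ∈ polarizedCanonicalForm C,
      g' ∣ g → g' = g) ∧
    (∀ G : Set (PolyS n), G ⊂ polarizedCanonicalForm C →
      Ideal.span G ≠ polarizedNeuralIdeal C) :=
  polarizedCanonicalForm_minimal_generating_set_general C
end

section
/- Let C be a neural code on n neurons such that neuron n is a k-piercing of C∖{n} with piercing data σ ⊆ τ ⊆ [n−1], let J_n, J_{n−1} ⊆ S be the polarized neural ideals of C and C∖{n} respectively, and let p_n = (x_i : i ∈ [n−1]∖τ) + (y_j : j ∈ σ). Then the colon ideal satisfies (J_n :_S x_n) = p_n, the sum satisfies J_n + (x_n) = J_{n−1} + (x_n), and consequently the sequence 0 → S/p_n →^{·x_n} S/J_n → S/(J_{n−1} + (x_n)) → 0 is exact. -/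
open MvPolynomial Finset

/-!
Both polarized neural ideals are generated by polarizations of pseudo-monomials, and a
pseudo-monomial lies in a neural ideal iff it vanishes at every codeword. As `C ∖ i ⊆ C` and
erasing `i` from a codeword of `C` gives a codeword of `C ∖ i`, the two ideals agree modulo
`x_i`. As `C` contains the whole interval `[σ, τ ∪ {i}]`, every generator of `J_n` is divisible
by a variable generating `p_i`; this monomial prime ideal does not contain `x_i`, so
`(J_n : x_i) ⊆ p_i`. Conversely `x_i x_j ∈ J_n` for `j ∉ τ ∪ {i}` and `x_i y_j ∈ J_n` for
`j ∈ σ`, since every codeword containing `i` lies in `[σ ∪ {i}, τ ∪ {i}]`. The exact sequence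
is then `0 → R ⧸ (J : x) → R ⧸ J → R ⧸ (J + (x)) → 0`, valid for any ideal of a commutative ring.
-/

namespace MvPolynomial

theorem mem_span_X_image_of_X_mul_mem {σ R : Type*} [CommSemiring R] {s : Set σ} {v : σ}
    (hv : v ∉ s) {f : MvPolynomial σ R} (h : X v * f ∈ Ideal.span (X '' s)) :
    f ∈ Ideal.span (X '' s) := by
  classical
  rw [mem_ideal_span_X_image] at h ⊢
  intro m hm
  obtain ⟨j, hj, hmj⟩ := h _ (by rw [support_X_mul]; exact Finset.mem_map_of_mem _ hm)
  refine ⟨j, hj, ?_⟩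
  simpa [Finsupp.single_apply, ne_of_mem_of_not_mem hj hv |>.symm] using hmj

end MvPolynomial

namespace Ideal

variable {R : Type*} [CommRing R] (J : Ideal R) (x : R)

def mulColonQ : (R ⧸ J.colon (span {x})) →ₗ[R] R ⧸ J :=
  Submodule.mapQ _ J (LinearMap.mulLeft R x) fun s hs => by
    simpa [mul_comm] using mem_colon_span_singleton.mp hs

theorem mulColonQ_mk (s : R) :
    mulColonQ J x (Quotient.mk _ s) = Quotient.mk J (x * s) := rfl

theorem mulColonQ_injective : Function.Injective (mulColonQ J x) := by
  rw [← LinearMap.ker_eq_bot, LinearMap.ker_eq_bot']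
  intro y hy
  obtain ⟨s, rfl⟩ := Quotient.mk_surjective y
  rw [mulColonQ_mk, Quotient.eq_zero_iff_mem] at hy
  exact Quotient.eq_zero_iff_mem.mpr (mem_colon_span_singleton.mpr (by simpa [mul_comm] using hy))

theorem exact_mulColonQ_factor :
    Function.Exact (mulColonQ J x) (Submodule.factor (le_sup_left : J ≤ J + span {x})) := by
  intro y
  obtain ⟨s, rfl⟩ := Quotient.mk_surjective y
  change Submodule.Quotient.mk s = 0 ↔ _
  rw [Submodule.Quotient.mk_eq_zero, Submodule.mem_sup]
  constructor
  · rintro ⟨u, hu, t, ht, rfl⟩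
    obtain ⟨c, rfl⟩ := mem_span_singleton'.mp ht
    refine ⟨Quotient.mk _ c, Quotient.eq.mpr ?_⟩
    simpa [mul_comm] using neg_mem hu
  · rintro ⟨z, hz⟩
    obtain ⟨c, rfl⟩ := Quotient.mk_surjective z
    refine ⟨s - x * c, ?_, x * c, mem_span_singleton'.mpr ⟨c, mul_comm c x⟩, sub_add_cancel _ _⟩
    simpa using Quotient.eq.mp hz.symm

end Ideal

section NeuralIdeals

variable {n : ℕ}

def evalIndicator (v : Finset (Fin n)) : PolyR n →+* F2 :=
  eval fun j => if j ∈ v then 1 else 0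

theorem evalIndicator_pseudoMonomial (v a b : Finset (Fin n)) :
    evalIndicator v (pseudoMonomial a b) = if a ⊆ v ∧ Disjoint v b then 1 else 0 := by
  classical
  simp only [evalIndicator, pseudoMonomial, map_mul, map_prod, map_sub, map_one, eval_X]
  split_ifs with h
  · rw [Finset.prod_eq_one fun j hj => if_pos (h.1 hj),
      Finset.prod_eq_one fun j hj => by rw [if_neg (Finset.disjoint_right.mp h.2 hj), sub_zero],
      one_mul]
  · rcases not_and_or.mp h with hav | hvb
    · obtain ⟨j, hja, hjv⟩ := Finset.not_subset.mp hav
      rw [Finset.prod_eq_zero hja (if_neg hjv), zero_mul]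
    · obtain ⟨j, hjv, hjb⟩ := Finset.not_disjoint_iff.mp hvb
      rw [Finset.prod_eq_zero (i := j) hjb (by rw [if_pos hjv, sub_self]), mul_zero]

theorem evalIndicator_eq_zero_of_mem_neuralIdeal {C : Finset (Finset (Fin n))}
    {v : Finset (Fin n)} (hv : v ∈ C) {f : PolyR n} (hf : f ∈ neuralIdeal C) :
    evalIndicator v f = 0 := by
  induction hf using Submodule.span_induction with
  | mem f hf =>
    obtain ⟨w, hw, rfl⟩ := hf
    rw [rhoPoly, evalIndicator_pseudoMonomial, if_neg]
    rintro ⟨hwv, hvw⟩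
    exact hw (Finset.Subset.antisymm hwv (disjoint_compl_right_iff.mp hvw) ▸ hv)
  | zero => simp
  | add f g _ _ hf hg => rw [map_add, hf, hg, add_zero]
  | smul r f _ hf => rw [smul_eq_mul, map_mul, hf, mul_zero]

theorem pseudoMonomial_eq_add (a b : Finset (Fin n)) {j : Fin n} (hja : j ∉ a) (hjb : j ∉ b) :
    pseudoMonomial a b = pseudoMonomial (insert j a) b + pseudoMonomial a (insert j b) := by
  simp only [pseudoMonomial, Finset.prod_insert hja, Finset.prod_insert hjb]
  ring

theorem pseudoMonomial_mem_neuralIdeal_iff {C : Finset (Finset (Fin n))} {a b : Finset (Fin n)}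
    (hab : Disjoint a b) :
    pseudoMonomial a b ∈ neuralIdeal C ↔ ∀ v ∈ C, ¬(a ⊆ v ∧ Disjoint v b) := by
  refine ⟨fun h v hv hvab => ?_, fun h => ?_⟩
  · have := evalIndicator_eq_zero_of_mem_neuralIdeal hv h
    rw [evalIndicator_pseudoMonomial, if_pos hvab] at this
    exact one_ne_zero this
  -- Split off the free variables one at a time until `b = aᶜ`, when it is a generator `ρ_a`.
  induction hm : (a ∪ b)ᶜ.card generalizing a b with
  | zero =>
    have hb : b = aᶜ := by
      rw [Finset.card_eq_zero, Finset.compl_eq_empty_iff] at hm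
      exact eq_compl_iff_isCompl.mpr ⟨hab.symm, codisjoint_iff.mpr (sup_comm a b ▸ hm)⟩
    subst hb
    exact Ideal.subset_span ⟨a, fun ha => h a ha ⟨subset_rfl, disjoint_compl_right⟩, rfl⟩
  | succ m ih =>
    obtain ⟨j, hj⟩ : ((a ∪ b)ᶜ).Nonempty := Finset.card_pos.mp (by omega)
    have hja : j ∉ a := fun h => Finset.mem_compl.mp hj (Finset.mem_union_left _ h)
    have hjb : j ∉ b := fun h => Finset.mem_compl.mp hj (Finset.mem_union_right _ h)
    rw [pseudoMonomial_eq_add a b hja hjb]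
    refine add_mem (ih (Finset.disjoint_insert_left.mpr ⟨hjb, hab⟩) ?_ ?_)
      (ih (Finset.disjoint_insert_right.mpr ⟨hja, hab⟩) ?_ ?_)
    · exact fun v hv hvab => h v hv ⟨(Finset.subset_insert j a).trans hvab.1, hvab.2⟩
    · rw [Finset.insert_union, Finset.compl_insert, Finset.card_erase_of_mem hj, hm]; rfl
    · exact fun v hv hvab => h v hv ⟨hvab.1, hvab.2.mono_right (Finset.subset_insert j b)⟩
    · rw [Finset.union_insert, Finset.compl_insert, Finset.card_erase_of_mem hj, hm]; rfl

theorem subset_and_subset_of_pseudoMonomial_dvd {a b c d : Finset (Fin n)} (hcd : Disjoint c d)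
    (h : pseudoMonomial a b ∣ pseudoMonomial c d) : a ⊆ c ∧ b ⊆ d := by
  have key : ∀ v, c ⊆ v → Disjoint v d → a ⊆ v ∧ Disjoint v b := by
    intro v hcv hvd
    obtain ⟨e, he⟩ := h
    have hv := congrArg (evalIndicator v) he
    rw [map_mul, evalIndicator_pseudoMonomial, evalIndicator_pseudoMonomial,
      if_pos ⟨hcv, hvd⟩] at hv
    by_contra hn
    rw [if_neg hn, zero_mul] at hv
    exact one_ne_zero hv
  exact ⟨(key c subset_rfl hcd).1,
    disjoint_compl_left_iff.mp (key dᶜ hcd.le_compl_right disjoint_compl_left).2⟩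

theorem polarize_dvd_polarize {a b c d : Finset (Fin n)} (hac : a ⊆ c) (hbd : b ⊆ d) :
    polarize a b ∣ polarize c d :=
  mul_dvd_mul (Finset.prod_dvd_prod_of_subset _ _ _ hac) (Finset.prod_dvd_prod_of_subset _ _ _ hbd)

/-- Descend to a minimal pseudo-monomial divisor, which lies in the canonical form; polarization
preserves the divisibility. -/
theorem polarize_mem_polarizedNeuralIdeal {C : Finset (Finset (Fin n))} {a b : Finset (Fin n)}
    (hab : Disjoint a b) (h : pseudoMonomial a b ∈ neuralIdeal C) :
    polarize a b ∈ polarizedNeuralIdeal C := by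
  induction hm : a.card + b.card using Nat.strong_induction_on generalizing a b with
  | _ m ih =>
  by_cases hmin : ∀ g, IsPseudoMonomial g → g ∈ neuralIdeal C → g ∣ pseudoMonomial a b →
      g = pseudoMonomial a b
  · exact Ideal.subset_span ⟨a, b, hab, ⟨⟨a, b, hab, rfl⟩, h, hmin⟩, rfl⟩
  push Not at hmin
  obtain ⟨_, ⟨a', b', hab', rfl⟩, h', hdvd, hne⟩ := hmin
  obtain ⟨ha, hb⟩ := subset_and_subset_of_pseudoMonomial_dvd hab hdvd
  have hlt : a'.card + b'.card < m := by
    have := Finset.card_le_card ha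
    have := Finset.card_le_card hb
    rcases ha.eq_or_ssubset with rfl | ha'
    · rcases hb.eq_or_ssubset with rfl | hb'
      · exact absurd rfl hne
      · have := Finset.card_lt_card hb'
        omega
    · have := Finset.card_lt_card ha'
      omega
  exact Ideal.mem_of_dvd _ (polarize_dvd_polarize ha hb) (ih _ hlt hab' h' rfl)

theorem X_inl_dvd_polarize {a : Finset (Fin n)} (b : Finset (Fin n)) {j : Fin n} (hj : j ∈ a) :
    X (Sum.inl j) ∣ polarize a b :=
  dvd_mul_of_dvd_left (Finset.dvd_prod_of_mem _ hj) _

theorem X_inr_dvd_polarize (a : Finset (Fin n)) {b : Finset (Fin n)} {j : Fin n} (hj : j ∈ b) :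
    X (Sum.inr j) ∣ polarize a b :=
  dvd_mul_of_dvd_right (Finset.dvd_prod_of_mem _ hj) _

theorem neuralIdeal_anti {C D : Finset (Finset (Fin n))} (hDC : D ⊆ C) :
    neuralIdeal C ≤ neuralIdeal D :=
  Ideal.span_mono fun _ ⟨v, hv, hf⟩ => ⟨v, fun h => hv (hDC h), hf⟩

theorem polarizedNeuralIdeal_anti {C D : Finset (Finset (Fin n))} (hDC : D ⊆ C) :
    polarizedNeuralIdeal C ≤ polarizedNeuralIdeal D :=
  Ideal.span_le.mpr fun _ ⟨_, _, hab, hcf, hm⟩ =>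
    hm ▸ polarize_mem_polarizedNeuralIdeal hab (neuralIdeal_anti hDC hcf.2.1)

theorem pseudoMonomial_mem_neuralIdeal_of_mem_deleteNeuron {C : Finset (Finset (Fin n))}
    {i : Fin n} {a b : Finset (Fin n)} (hab : Disjoint a b) (hia : i ∉ a)
    (h : pseudoMonomial a b ∈ neuralIdeal (deleteNeuron C i)) :
    pseudoMonomial a b ∈ neuralIdeal C := by
  rw [pseudoMonomial_mem_neuralIdeal_iff hab] at h ⊢
  exact fun v hv ⟨hav, hvb⟩ => h (v.erase i) (Finset.mem_image_of_mem _ hv)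
    ⟨Finset.subset_erase.mpr ⟨hav, hia⟩, hvb.mono_left (Finset.erase_subset i v)⟩

theorem polarizedNeuralIdeal_deleteNeuron_le (C : Finset (Finset (Fin n))) (i : Fin n) :
    polarizedNeuralIdeal (deleteNeuron C i) ≤
      polarizedNeuralIdeal C ⊔ Ideal.span {X (Sum.inl i)} := by
  refine Ideal.span_le.mpr ?_
  rintro _ ⟨a, b, hab, hcf, rfl⟩
  by_cases hia : i ∈ a
  · exact Ideal.mem_sup_right (Ideal.mem_span_singleton.mpr (X_inl_dvd_polarize b hia))
  · exact Ideal.mem_sup_left (polarize_mem_polarizedNeuralIdeal hab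
      (pseudoMonomial_mem_neuralIdeal_of_mem_deleteNeuron hab hia hcf.2.1))

theorem mem_codeInterval {σ τ v : Finset (Fin n)} :
    v ∈ codeInterval σ τ ↔ σ ⊆ v ∧ v ⊆ τ := by
  rw [codeInterval, Finset.mem_filter, Finset.mem_powerset, and_comm]

/-- A generator `polarize a b` with `a ⊆ τ` and `σ ∩ b = ∅` would not vanish at the codeword
`σ ∪ a`. -/
theorem polarizedNeuralIdeal_le_span_X {C : Finset (Finset (Fin n))} {σ τ : Finset (Fin n)}
    (hστ : σ ⊆ τ) (h : codeInterval σ τ ⊆ C) :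
    polarizedNeuralIdeal C ≤ Ideal.span (X '' (Sum.inl '' (↑τ)ᶜ ∪ Sum.inr '' ↑σ)) := by
  refine Ideal.span_le.mpr ?_
  rintro _ ⟨a, b, hab, hcf, rfl⟩
  have hvanish := (pseudoMonomial_mem_neuralIdeal_iff hab).mp hcf.2.1
  by_cases haτ : a ⊆ τ
  · by_cases hσb : Disjoint σ b
    · exact absurd ⟨Finset.subset_union_right, Finset.disjoint_union_left.mpr ⟨hσb, hab⟩⟩
        (hvanish (σ ∪ a) (h (mem_codeInterval.mpr
          ⟨Finset.subset_union_left, Finset.union_subset hστ haτ⟩)))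
    · obtain ⟨j, hjσ, hjb⟩ := Finset.not_disjoint_iff.mp hσb
      exact Ideal.mem_of_dvd _ (X_inr_dvd_polarize a hjb)
        (Ideal.subset_span ⟨Sum.inr j, Or.inr ⟨j, hjσ, rfl⟩, rfl⟩)
  · obtain ⟨j, hja, hjτ⟩ := Finset.not_subset.mp haτ
    exact Ideal.mem_of_dvd _ (X_inl_dvd_polarize b hja)
      (Ideal.subset_span ⟨Sum.inl j, Or.inl ⟨j, hjτ, rfl⟩, rfl⟩)

theorem piercingIdeal_eq_span_X_image (i : Fin n) (σ τ : Finset (Fin n)) :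
    piercingIdeal i σ τ =
      Ideal.span (X '' (Sum.inl '' (↑(insert i τ))ᶜ ∪ Sum.inr '' ↑σ)) := by
  rw [piercingIdeal, Set.image_union, Set.image_image, Set.image_image]
  congr 1
  ext m
  simp [eq_comm, and_assoc]

end NeuralIdeals


namespace IsPiercingWith

variable {n : ℕ} {C : Finset (Finset (Fin n))} {i : Fin n} {σ τ : Finset (Fin n)}

theorem deleteNeuron_subset (hp : IsPiercingWith C i σ τ) : deleteNeuron C i ⊆ C := by
  intro v hv
  rw [hp.2.2.2]
  exact Finset.mem_union_left _ hv

theorem subset_of_mem (hp : IsPiercingWith C i σ τ) {v : Finset (Fin n)} (hv : v ∈ C)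
    (hiv : i ∈ v) : insert i σ ⊆ v ∧ v ⊆ insert i τ := by
  rw [hp.2.2.2, Finset.mem_union] at hv
  rcases hv with hv | hv
  · obtain ⟨c, -, rfl⟩ := Finset.mem_image.mp hv
    exact absurd hiv (Finset.notMem_erase i c)
  · exact mem_codeInterval.mp hv

theorem codeInterval_insert_subset (hp : IsPiercingWith C i σ τ) :
    codeInterval σ (insert i τ) ⊆ C := by
  intro v hv
  obtain ⟨hσv, hvτ⟩ := mem_codeInterval.mp hv
  by_cases hiv : i ∈ v
  · rw [hp.2.2.2]
    exact Finset.mem_union_right _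
      (mem_codeInterval.mpr ⟨Finset.insert_subset hiv hσv, hvτ⟩)
  · exact hp.deleteNeuron_subset
      (hp.2.2.1 (mem_codeInterval.mpr ⟨hσv, (Finset.subset_insert_iff_of_notMem hiv).mp hvτ⟩))

theorem polarizedNeuralIdeal_colon_eq (hp : IsPiercingWith C i σ τ) :
    (polarizedNeuralIdeal C).colon (Ideal.span {(X (Sum.inl i) : PolyS n)}) =
      piercingIdeal i σ τ := by
  rw [piercingIdeal_eq_span_X_image]
  have hJ := polarizedNeuralIdeal_le_span_X (hp.1.trans (Finset.subset_insert i τ))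
    hp.codeInterval_insert_subset
  refine le_antisymm (fun s hs => mem_span_X_image_of_X_mul_mem (v := Sum.inl i) (by simp)
    (hJ (mul_comm s _ ▸ Ideal.mem_colon_span_singleton.mp hs))) (Ideal.span_le.mpr ?_)
  rintro _ ⟨_, ⟨j, hj, rfl⟩ | ⟨j, hjσ, rfl⟩, rfl⟩
  · rw [SetLike.mem_coe, Ideal.mem_colon_span_singleton]
    have hj : j ∉ insert i τ := hj
    have hji : j ≠ i := fun h => hj (h ▸ Finset.mem_insert_self i τ)
    have hab : Disjoint ({j, i} : Finset (Fin n)) ∅ := Finset.disjoint_empty_right _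
    have := polarize_mem_polarizedNeuralIdeal hab
      ((pseudoMonomial_mem_neuralIdeal_iff hab).mpr fun v hv ⟨hjiv, _⟩ =>
        hj ((hp.subset_of_mem hv (hjiv (by simp))).2 (hjiv (by simp))))
    simpa [polarize, Finset.prod_pair hji] using this
  · rw [SetLike.mem_coe, Ideal.mem_colon_span_singleton]
    have hij : i ≠ j := fun h => hp.2.1 (h ▸ hp.1 hjσ)
    have hab : Disjoint ({i} : Finset (Fin n)) {j} := Finset.disjoint_singleton.mpr hij
    have := polarize_mem_polarizedNeuralIdeal hab
      ((pseudoMonomial_mem_neuralIdeal_iff hab).mpr fun v hv ⟨hiv, hvj⟩ =>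
        Finset.disjoint_singleton_right.mp hvj
          ((hp.subset_of_mem hv (hiv (Finset.mem_singleton_self i))).1
            (Finset.mem_insert_of_mem hjσ)))
    simpa [polarize, mul_comm] using this

theorem polarizedNeuralIdeal_add_span_X (hp : IsPiercingWith C i σ τ) :
    polarizedNeuralIdeal C + Ideal.span {(X (Sum.inl i) : PolyS n)} =
      polarizedNeuralIdeal (deleteNeuron C i) + Ideal.span {(X (Sum.inl i) : PolyS n)} :=
  le_antisymm (sup_le_sup_right (polarizedNeuralIdeal_anti hp.deleteNeuron_subset) _)
    (sup_le (polarizedNeuralIdeal_deleteNeuron_le C i) le_sup_right)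

end IsPiercingWith

theorem piercing_short_exact_sequence_general {n : ℕ}
    (C : Finset (Finset (Fin n))) (i : Fin n)
    (σ τ : Finset (Fin n))
    (hp : IsPiercingWith C i σ τ) :
    (polarizedNeuralIdeal C).colon (Ideal.span {(X (Sum.inl i) : PolyS n)}) =
      piercingIdeal i σ τ ∧
    polarizedNeuralIdeal C + Ideal.span {(X (Sum.inl i) : PolyS n)} =
      polarizedNeuralIdeal (deleteNeuron C i) +
        Ideal.span {(X (Sum.inl i) : PolyS n)} ∧
    ∃ (f : (PolyS n ⧸ piercingIdeal i σ τ) →ₗ[PolyS n]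
            (PolyS n ⧸ polarizedNeuralIdeal C))
      (g : (PolyS n ⧸ polarizedNeuralIdeal C) →ₗ[PolyS n]
            (PolyS n ⧸ (polarizedNeuralIdeal (deleteNeuron C i) +
              Ideal.span {(X (Sum.inl i) : PolyS n)}))),
      (∀ s : PolyS n,
        f (Ideal.Quotient.mk (piercingIdeal i σ τ) s) =
          Ideal.Quotient.mk (polarizedNeuralIdeal C) (X (Sum.inl i) * s)) ∧
      (∀ s : PolyS n,
        g (Ideal.Quotient.mk (polarizedNeuralIdeal C) s) =
          Ideal.Quotient.mk (polarizedNeuralIdeal (deleteNeuron C i) +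
            Ideal.span {(X (Sum.inl i) : PolyS n)}) s) ∧
      Function.Injective f ∧ Function.Surjective g ∧ Function.Exact f g := by
  refine ⟨hp.polarizedNeuralIdeal_colon_eq, hp.polarizedNeuralIdeal_add_span_X, ?_⟩
  rw [← hp.polarizedNeuralIdeal_colon_eq, ← hp.polarizedNeuralIdeal_add_span_X]
  exact ⟨Ideal.mulColonQ _ _, Submodule.factor le_sup_left, Ideal.mulColonQ_mk _ _,
    fun _ => rfl, Ideal.mulColonQ_injective _ _, Submodule.factor_surjective _,
    Ideal.exact_mulColonQ_factor _ _⟩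

/-- With neuron `i` a `k`-piercing of `C∖i`: `(J_n : x_i) = p_i`,
`J_n + (x_i) = J_{n-1} + (x_i)`, and the sequence
`0 → S/p_i →^{·x_i} S/J_n → S/(J_{n-1} + (x_i)) → 0` is exact. -/
theorem piercing_short_exact_sequence {n : ℕ}
    (C : Finset (Finset (Fin n))) (hC : ∅ ∈ C) (i : Fin n)
    (σ τ : Finset (Fin n)) (k : ℕ)
    (hp : IsPiercingWith C i σ τ) (hk : τ.card = σ.card + k) :
    (polarizedNeuralIdeal C).colon (Ideal.span {(X (Sum.inl i) : PolyS n)}) =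
      piercingIdeal i σ τ ∧
    polarizedNeuralIdeal C + Ideal.span {(X (Sum.inl i) : PolyS n)} =
      polarizedNeuralIdeal (deleteNeuron C i) +
        Ideal.span {(X (Sum.inl i) : PolyS n)} ∧
    ∃ (f : (PolyS n ⧸ piercingIdeal i σ τ) →ₗ[PolyS n]
            (PolyS n ⧸ polarizedNeuralIdeal C))
      (g : (PolyS n ⧸ polarizedNeuralIdeal C) →ₗ[PolyS n]
            (PolyS n ⧸ (polarizedNeuralIdeal (deleteNeuron C i) +
              Ideal.span {(X (Sum.inl i) : PolyS n)}))),
      (∀ s : PolyS n,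
        f (Ideal.Quotient.mk (piercingIdeal i σ τ) s) =
          Ideal.Quotient.mk (polarizedNeuralIdeal C) (X (Sum.inl i) * s)) ∧
      (∀ s : PolyS n,
        g (Ideal.Quotient.mk (polarizedNeuralIdeal C) s) =
          Ideal.Quotient.mk (polarizedNeuralIdeal (deleteNeuron C i) +
            Ideal.span {(X (Sum.inl i) : PolyS n)}) s) ∧
      Function.Injective f ∧ Function.Surjective g ∧ Function.Exact f g :=
  piercing_short_exact_sequence_general C i σ τ hp
end

section
/- Let G be a finite chordal graph. Then for every k, the number of vertices of simplicial degree k removed is the same in every simplicial elimination ordering of G. That is, if v_n, …, v_1 and w_n, …, w_1 are two simplicial elimination orderings of G, then for each k the number of indices i such that v_i has degree k in the subgraph induced by {v_1, …, v_i} equals the number of indices i such that w_i has degree k in the subgraph induced by {w_1, …, w_i}. -/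
/-- A finite simple graph is chordal if every cycle of length at least 4 has a chord:
an edge of the graph between two vertices of the cycle that is not an edge of the
cycle. -/
def SimpleGraph.IsChordalGraph {V : Type*} (G : SimpleGraph V) : Prop :=
  ∀ (v : V) (c : G.Walk v v), c.IsCycle → 4 ≤ c.length →
    ∃ a b : V, a ∈ c.support ∧ b ∈ c.support ∧ G.Adj a b ∧ s(a, b) ∉ c.edges

/-- `e 0, e 1, …, e (n-1)` is (the reverse of) a simplicial elimination ordering:
each vertex `e i` is simplicial in the subgraph induced by `{e 0, …, e i}`, i.e. its
neighbors among the earlier vertices form a clique. -/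
def IsSimplicialElimOrdering {V : Type*} {n : ℕ} (G : SimpleGraph V)
    (e : Fin n ≃ V) : Prop :=
  ∀ i j k : Fin n, j < i → k < i → j ≠ k →
    G.Adj (e i) (e j) → G.Adj (e i) (e k) → G.Adj (e j) (e k)

/-- The simplicial degree of `e i`: the number of its neighbors among the vertices
remaining at the time of its removal, i.e. among `{e 0, …, e (i-1)}`. -/
def simplicialDegree {V : Type*} {n : ℕ} (G : SimpleGraph V) [DecidableRel G.Adj]
    (e : Fin n ≃ V) (i : Fin n) : ℕ :=
  (Finset.univ.filter (fun j : Fin n => j < i ∧ G.Adj (e i) (e j))).card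

/-!
Every clique of `G` is obtained exactly once from its vertex `v_i` of largest index as `v_i`
together with a subset of the neighbours of `v_i` among `v_1, …, v_(i-1)`; since these
neighbours form a clique, each of their subsets arises. Hence `∑ᵢ (dᵢ choose k)` is the
number of `(k + 1)`-cliques, whatever the ordering. These binomial moments determine how many
`dᵢ` equal each `m`: they are the coefficients of `∑ᵢ (X + 1) ^ dᵢ`, and substituting
`X - 1` for `X` recovers `∑ᵢ X ^ dᵢ`.
-/

open Finset Polynomial

section BinomialMoments

variable {ι ι' : Type*}

theorem sum_X_add_one_pow_comp_X_sub_one (s : Finset ι) (d : ι → ℕ) :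
    (∑ i ∈ s, (X + 1 : ℤ[X]) ^ d i).comp (X - 1) = ∑ i ∈ s, X ^ d i := by
  simp [Polynomial.sum_comp]

theorem coeff_sum_X_pow (s : Finset ι) (d : ι → ℕ) (k : ℕ) :
    (∑ i ∈ s, (X : ℤ[X]) ^ d i).coeff k = #{i ∈ s | d i = k} := by
  simp [coeff_X_pow, eq_comm]

theorem card_filter_eq_of_sum_choose_eq (s : Finset ι) (s' : Finset ι') (d : ι → ℕ)
    (d' : ι' → ℕ) (h : ∀ k, ∑ i ∈ s, (d i).choose k = ∑ i ∈ s', (d' i).choose k) (k : ℕ) :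
    #{i ∈ s | d i = k} = #{i ∈ s' | d' i = k} := by
  have hpoly : ∑ i ∈ s, (X + 1 : ℤ[X]) ^ d i = ∑ i ∈ s', (X + 1 : ℤ[X]) ^ d' i := by
    ext m
    simpa [finsetSum_coeff, coeff_X_add_one_pow] using congrArg (Nat.cast (R := ℤ)) (h m)
  have hcoeff := congrArg (fun p : ℤ[X] => (p.comp (X - 1)).coeff k) hpoly
  simpa only [sum_X_add_one_pow_comp_X_sub_one, coeff_sum_X_pow, Nat.cast_inj] using hcoeff

end BinomialMoments

namespace SimpleGraph

section LinearOrder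

variable {α : Type*} [LinearOrder α] [Fintype α] (H : SimpleGraph α) [DecidableRel H.Adj]

def lowerNeighborFinset (i : α) : Finset α := {j | j < i ∧ H.Adj i j}

variable {H}

theorem mem_lowerNeighborFinset {i j : α} :
    j ∈ H.lowerNeighborFinset i ↔ j < i ∧ H.Adj i j := by
  simp [lowerNeighborFinset]

theorem isNClique_insert_of_subset_lowerNeighborFinset
    (hH : ∀ i, H.IsClique (H.lowerNeighborFinset i : Set α)) {i : α} {s : Finset α} {k : ℕ}
    (hs : s ⊆ H.lowerNeighborFinset i) (hk : #s = k) : H.IsNClique (k + 1) (insert i s) :=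
  IsNClique.insert ⟨(hH i).subset (by exact_mod_cast hs), hk⟩
    fun _ hj => (mem_lowerNeighborFinset.1 (hs hj)).2

theorem max'_insert_of_subset_lowerNeighborFinset {i : α} {s : Finset α}
    (hs : s ⊆ H.lowerNeighborFinset i) : (insert i s).max' (insert_nonempty i s) = i :=
  le_antisymm
    (max'_le _ _ _ fun _ hj => (mem_insert.1 hj).elim le_of_eq
      fun hj => (mem_lowerNeighborFinset.1 (hs hj)).1.le)
    (le_max' _ _ (mem_insert_self i s))

theorem IsClique.erase_max'_subset_lowerNeighborFinset {s : Finset α}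
    (hs : H.IsClique (s : Set α)) (hne : s.Nonempty) :
    s.erase (s.max' hne) ⊆ H.lowerNeighborFinset (s.max' hne) := by
  intro j hj
  obtain ⟨hjm, hj⟩ := mem_erase.1 hj
  exact mem_lowerNeighborFinset.2
    ⟨lt_of_le_of_ne (le_max' s j hj) hjm, hs (max'_mem s hne) hj (Ne.symm hjm)⟩

theorem card_cliqueFinset_succ_eq_sum_choose
    (hH : ∀ i, H.IsClique (H.lowerNeighborFinset i : Set α)) (k : ℕ) :
    #(H.cliqueFinset (k + 1)) = ∑ i, (#(H.lowerNeighborFinset i)).choose k := by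
  have hne {s : Finset α} (hs : s ∈ H.cliqueFinset (k + 1)) : s.Nonempty :=
    card_pos.1 ((mem_cliqueFinset_iff.1 hs).card_eq ▸ k.succ_pos)
  simp only [← card_powersetCard, ← card_sigma]
  symm
  refine card_bij' (fun p _ => insert p.1 p.2)
    (fun s hs => ⟨s.max' (hne hs), s.erase (s.max' (hne hs))⟩) ?_ ?_ ?_ ?_
  · rintro ⟨i, s⟩ hs
    simp only [mem_sigma, mem_univ, true_and, mem_powersetCard] at hs
    exact mem_cliqueFinset_iff.2 (isNClique_insert_of_subset_lowerNeighborFinset hH hs.1 hs.2)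
  · intro s hs
    have hs' := mem_cliqueFinset_iff.1 hs
    simp only [mem_sigma, mem_univ, true_and, mem_powersetCard]
    exact ⟨hs'.isClique.erase_max'_subset_lowerNeighborFinset (hne hs),
      (hs'.erase_of_mem (max'_mem s _)).card_eq⟩
  · rintro ⟨i, s⟩ hs
    simp only [mem_sigma, mem_univ, true_and, mem_powersetCard] at hs
    have hi : i ∉ s := fun h => (mem_lowerNeighborFinset.1 (hs.1 h)).1.false
    simp only [max'_insert_of_subset_lowerNeighborFinset hs.1, erase_insert hi]
  · intro s hs
    exact insert_erase (max'_mem s (hne hs))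

end LinearOrder

theorem card_cliqueFinset_comap_equiv {V α : Type*} [Fintype α] [DecidableEq α]
    (G : SimpleGraph V) [DecidableRel G.Adj] (e : α ≃ V) (m : ℕ) :
    #((G.comap e).cliqueFinset m) = (G.cliqueSet m).ncard := by
  have hcomap : (G.comap e).cliqueSet m = Finset.map e.symm.toEmbedding '' G.cliqueSet m := by
    rw [← cliqueSet_map_of_equiv]
    congr 1
    exact (map_symm G e).symm
  rw [← Set.ncard_coe_finset, coe_cliqueFinset, hcomap,
    Set.ncard_image_of_injective _ (Finset.map_injective _)]

end SimpleGraph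

section EliminationOrdering

variable {V : Type*} {n : ℕ} {G : SimpleGraph V} [DecidableRel G.Adj]

theorem simplicialDegree_eq_card_lowerNeighborFinset (e : Fin n ≃ V) (i : Fin n) :
    simplicialDegree G e i = #((G.comap e).lowerNeighborFinset i) := rfl

theorem IsSimplicialElimOrdering.isClique_lowerNeighborFinset {e : Fin n ≃ V}
    (he : IsSimplicialElimOrdering G e) (i : Fin n) :
    (G.comap e).IsClique ((G.comap e).lowerNeighborFinset i : Set (Fin n)) := by
  intro j hj k hk hjk
  rw [mem_coe, SimpleGraph.mem_lowerNeighborFinset] at hj hk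
  exact he i j k hj.1 hk.1 hjk hj.2 hk.2

theorem IsSimplicialElimOrdering.sum_choose_simplicialDegree {e : Fin n ≃ V}
    (he : IsSimplicialElimOrdering G e) (k : ℕ) :
    ∑ i, (simplicialDegree G e i).choose k = (G.cliqueSet (k + 1)).ncard := by
  simp only [simplicialDegree_eq_card_lowerNeighborFinset,
    ← (G.comap e).card_cliqueFinset_succ_eq_sum_choose he.isClique_lowerNeighborFinset,
    G.card_cliqueFinset_comap_equiv]

end EliminationOrdering

theorem chordal_simplicial_degree_counts_fixed_general {V : Type*} {n : ℕ} (G : SimpleGraph V)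
    [DecidableRel G.Adj] (e e' : Fin n ≃ V)
    (he : IsSimplicialElimOrdering G e) (he' : IsSimplicialElimOrdering G e') :
    ∀ k : ℕ,
      (Finset.univ.filter (fun i : Fin n => simplicialDegree G e i = k)).card =
        (Finset.univ.filter (fun i : Fin n => simplicialDegree G e' i = k)).card :=
  card_filter_eq_of_sum_choose_eq _ _ _ _ fun k => by
    rw [he.sum_choose_simplicialDegree, he'.sum_choose_simplicialDegree]

/-- In a finite chordal graph, the number of vertices removed with
simplicial degree `k` is the same in every simplicial elimination ordering. -/
theorem chordal_simplicial_degree_counts_fixed {V : Type*} [Fintype V]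
    [DecidableEq V] {n : ℕ} (G : SimpleGraph V) [DecidableRel G.Adj]
    (hG : G.IsChordalGraph) (e e' : Fin n ≃ V)
    (he : IsSimplicialElimOrdering G e) (he' : IsSimplicialElimOrdering G e') :
    ∀ k : ℕ,
      (Finset.univ.filter (fun i : Fin n => simplicialDegree G e i = k)).card =
        (Finset.univ.filter (fun i : Fin n => simplicialDegree G e' i = k)).card :=
  chordal_simplicial_degree_counts_fixed_general G e e' he he'
end
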